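/- arXiv:hep-th/9510095 — 2 statements merged into one kernel-verified Lean document; each statement's English description precedes it below -/
import Mathlib

section
/- The diagonal reflection matrix K₋(u) = diag(sin(ξ+u), sin(ξ−u)) satisfies the reflection equation R^{12}(u−v) K₋¹(u) R^{12}(u+v) K₋²(v) = K₋²(v) R^{12}(u+v) K₋¹(u) R^{12}(u−v) with the six-vertex R-matrix. -/
open Matrix Complex

/-- The six-vertex R-matrix on ℂ²⊗ℂ², indexed by `Fin 2 × Fin 2`. -/
noncomputable def Rsix (lam u : ℂ) : Matrix (Fin 2 × Fin 2) (Fin 2 × Fin 2) ℂ :=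
  fun p q =>
    if p.1 = q.1 ∧ p.2 = q.2 then
      (if p.1 = p.2 then Complex.sin (u + lam) else Complex.sin u)
    else if p.1 = q.2 ∧ p.2 = q.1 then Complex.sin lam else 0

/-- R acting on factors 1,2 of ℂ²⊗ℂ²⊗ℂ². -/
noncomputable def R12 (lam u : ℂ) : Matrix (Fin 2 × Fin 2 × Fin 2) (Fin 2 × Fin 2 × Fin 2) ℂ :=
  fun p q => Rsix lam u (p.1, p.2.1) (q.1, q.2.1) * (if p.2.2 = q.2.2 then 1 else 0)

/-- R acting on factors 1,3 of ℂ²⊗ℂ²⊗ℂ². -/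
noncomputable def R13 (lam u : ℂ) : Matrix (Fin 2 × Fin 2 × Fin 2) (Fin 2 × Fin 2 × Fin 2) ℂ :=
  fun p q => Rsix lam u (p.1, p.2.2) (q.1, q.2.2) * (if p.2.1 = q.2.1 then 1 else 0)

/-- R acting on factors 2,3 of ℂ²⊗ℂ²⊗ℂ². -/
noncomputable def R23 (lam u : ℂ) : Matrix (Fin 2 × Fin 2 × Fin 2) (Fin 2 × Fin 2 × Fin 2) ℂ :=
  fun p q => Rsix lam u p.2 q.2 * (if p.1 = q.1 then 1 else 0)

/-- Partial transpose in the first tensor factor. -/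
noncomputable def pt1 (M : Matrix (Fin 2 × Fin 2) (Fin 2 × Fin 2) ℂ) :
    Matrix (Fin 2 × Fin 2) (Fin 2 × Fin 2) ℂ :=
  fun p q => M (q.1, p.2) (p.1, q.2)

/-- Partial transpose in the second tensor factor. -/
noncomputable def pt2 (M : Matrix (Fin 2 × Fin 2) (Fin 2 × Fin 2) ℂ) :
    Matrix (Fin 2 × Fin 2) (Fin 2 × Fin 2) ℂ :=
  fun p q => M (p.1, q.2) (q.1, p.2)

/-- The permutation (swap) operator on ℂ²⊗ℂ². -/
noncomputable def Pswap : Matrix (Fin 2 × Fin 2) (Fin 2 × Fin 2) ℂ :=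
  fun p q => if p.1 = q.2 ∧ p.2 = q.1 then 1 else 0

/-- The antisymmetric projector Y₂⁻ = ½(Id − P). -/
noncomputable def Yminus : Matrix (Fin 2 × Fin 2) (Fin 2 × Fin 2) ℂ :=
  (1 / 2 : ℂ) • ((1 : Matrix (Fin 2 × Fin 2) (Fin 2 × Fin 2) ℂ) - Pswap)

/-- K ⊗ I : a 2×2 matrix acting on the first tensor factor. -/
noncomputable def lift1 (K : Matrix (Fin 2) (Fin 2) ℂ) :
    Matrix (Fin 2 × Fin 2) (Fin 2 × Fin 2) ℂ :=
  fun p q => K p.1 q.1 * (if p.2 = q.2 then 1 else 0)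

/-- I ⊗ K : a 2×2 matrix acting on the second tensor factor. -/
noncomputable def lift2 (K : Matrix (Fin 2) (Fin 2) ℂ) :
    Matrix (Fin 2 × Fin 2) (Fin 2 × Fin 2) ℂ :=
  fun p q => (if p.1 = q.1 then 1 else 0) * K p.2 q.2

/-- The general (non-diagonal) reflection matrix K₋(u). -/
noncomputable def Kminus (ξ μ ν u : ℂ) : Matrix (Fin 2) (Fin 2) ℂ :=
  !![Complex.sin (ξ + u), μ * Complex.sin (2 * u);
     ν * Complex.sin (2 * u), Complex.sin (ξ - u)]

/-- The general (non-diagonal) reflection matrix K₊(u). -/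
noncomputable def Kplus (lam ξ μ ν u : ℂ) : Matrix (Fin 2) (Fin 2) ℂ :=
  !![Complex.sin (ξ - u - lam), ν * Complex.sin (2 * u + 2 * lam);
     μ * Complex.sin (2 * u + 2 * lam), Complex.sin (ξ + u + lam)]

/-- The diagonal reflection matrix. -/
noncomputable def KminusDiag (ξ u : ℂ) : Matrix (Fin 2) (Fin 2) ℂ :=
  !![Complex.sin (ξ + u), 0; 0, Complex.sin (ξ - u)]

set_option maxHeartbeats 4000000 in
/-- the diagonal K₋ satisfies the reflection equation. -/
theorem six_vertex_reflection_equation_diagonal (lam ξ u v : ℂ) :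
    Rsix lam (u - v) * lift1 (KminusDiag ξ u) * Rsix lam (u + v) * lift2 (KminusDiag ξ v) =
      lift2 (KminusDiag ξ v) * Rsix lam (u + v) * lift1 (KminusDiag ξ u) * Rsix lam (u - v) := by
  ext ⟨i, j⟩ ⟨k, l⟩
  fin_cases i <;> fin_cases j <;> fin_cases k <;> fin_cases l <;>
    (simp only [Matrix.mul_apply, Fintype.sum_prod_type, Fin.sum_univ_two,
      Rsix, lift1, lift2, KminusDiag, Matrix.cons_val', Matrix.cons_val_zero,
      Matrix.cons_val_one, Matrix.head_cons, Matrix.head_fin_const, Matrix.empty_val',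
      Matrix.cons_val_fin_one]
     norm_num [Fin.ext_iff]) <;>
  · simp only [Complex.sin, neg_mul, neg_add, neg_sub, add_mul, sub_mul,
      Complex.exp_add, Complex.exp_sub, Complex.exp_neg]
    field_simp
    all_goals ring
end

section
/- The commuting-transfer-matrix identity for the six-vertex model with boundaries: for the double-row transfer matrix T(u) = tr₀[ K₊ᵗ(u)·T₀(u)·K₋(u)·T̂₀(u) ] built from the six-vertex R-matrix on N=1 site with the general reflection matrices K₋, K₊, one has T(u)·T(v) = T(v)·T(u) for all complex u, v. -/
open Matrix Complex

/-- R acting with the roles of the two factors swapped: R^{1,0}. -/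
noncomputable def RsixSwap (lam u : ℂ) : Matrix (Fin 2 × Fin 2) (Fin 2 × Fin 2) ℂ :=
  fun p q => Rsix lam u (p.2, p.1) (q.2, q.1)

/-- Partial trace over the first (auxiliary) tensor factor. -/
noncomputable def ptrace0 (M : Matrix (Fin 2 × Fin 2) (Fin 2 × Fin 2) ℂ) :
    Matrix (Fin 2) (Fin 2) ℂ :=
  fun i j => ∑ a : Fin 2, M (a, i) (a, j)

/-- The double-row transfer matrix for N = 1 site:
T(u) = tr₀[K₊ᵗ(u) R^{0,1}(u) K₋⁰(u) R^{1,0}(u)]. -/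
noncomputable def transferT (lam ξp μp νp ξm μm νm u : ℂ) : Matrix (Fin 2) (Fin 2) ℂ :=
  ptrace0 (lift1 ((Kplus lam ξp μp νp u)ᵀ) * Rsix lam u * lift1 (Kminus ξm μm νm u) *
    RsixSwap lam u)


noncomputable def Ee (x : ℂ) : ℂ := Complex.exp (x * Complex.I)
lemma Ee_ne (x : ℂ) : Ee x ≠ 0 := Complex.exp_ne_zero _
lemma sin_Ee (x : ℂ) : Complex.sin x = ((Ee x)⁻¹ - Ee x) * Complex.I / 2 := by
  simp only [Complex.sin, Ee, neg_mul, Complex.exp_neg]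
lemma Ee_add (x y : ℂ) : Ee (x + y) = Ee x * Ee y := by
  simp only [Ee, add_mul, Complex.exp_add]
lemma Ee_sub (x y : ℂ) : Ee (x - y) = Ee x * (Ee y)⁻¹ := by
  simp only [Ee, sub_mul, Complex.exp_sub, div_eq_mul_inv]
lemma Ee_two (x : ℂ) : Ee (2 * x) = Ee x * Ee x := by rw [two_mul, Ee_add]

/-- The fixed matrix direction of the transfer matrix. -/
noncomputable def Mmat (ξp μp νp ξm μm νm : ℂ) : Matrix (Fin 2) (Fin 2) ℂ :=
  !![0, μp * Complex.sin ξm + μm * Complex.sin ξp;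
     νp * Complex.sin ξm + νm * Complex.sin ξp, -Complex.sin (ξp - ξm)]

set_option maxHeartbeats 2000000 in
lemma transferT_form (lam ξp μp νp ξm μm νm u : ℂ) :
    transferT lam ξp μp νp ξm μm νm u =
      (transferT lam ξp μp νp ξm μm νm u 0 0) • (1 : Matrix (Fin 2) (Fin 2) ℂ) +
      (Complex.sin (2 * u) * Complex.sin (2 * u + 2 * lam) * Complex.sin lam) •
        Mmat ξp μp νp ξm μm νm := by
  have hu : Ee u * (Ee u)⁻¹ = 1 := mul_inv_cancel₀ (Ee_ne u)
  have hl : Ee lam * (Ee lam)⁻¹ = 1 := mul_inv_cancel₀ (Ee_ne lam)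
  ext i j
  fin_cases i <;> fin_cases j
  · simp only [transferT, ptrace0, Matrix.mul_apply, Fin.sum_univ_two, lift1, Rsix, RsixSwap,
      Kminus, Kplus, Mmat, Matrix.transpose_apply, Fintype.sum_prod_type, Matrix.cons_val',
      Matrix.cons_val_zero, Matrix.cons_val_one, Matrix.head_cons, Matrix.head_fin_const,
      Matrix.empty_val', Matrix.cons_val_fin_one, Matrix.add_apply, Matrix.smul_apply,
      Matrix.one_apply, smul_eq_mul]
    norm_num
  · simp only [transferT, ptrace0, Matrix.mul_apply, Fin.sum_univ_two, lift1, Rsix, RsixSwap,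
      Kminus, Kplus, Mmat, Matrix.transpose_apply, Fintype.sum_prod_type, Matrix.cons_val',
      Matrix.cons_val_zero, Matrix.cons_val_one, Matrix.head_cons, Matrix.head_fin_const,
      Matrix.empty_val', Matrix.cons_val_fin_one, Matrix.add_apply, Matrix.smul_apply,
      Matrix.one_apply, smul_eq_mul]
    norm_num
    simp only [sin_Ee, Ee_add, Ee_sub, Ee_two, mul_inv, inv_inv]
    ring
  · simp only [transferT, ptrace0, Matrix.mul_apply, Fin.sum_univ_two, lift1, Rsix, RsixSwap,
      Kminus, Kplus, Mmat, Matrix.transpose_apply, Fintype.sum_prod_type, Matrix.cons_val',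
      Matrix.cons_val_zero, Matrix.cons_val_one, Matrix.head_cons, Matrix.head_fin_const,
      Matrix.empty_val', Matrix.cons_val_fin_one, Matrix.add_apply, Matrix.smul_apply,
      Matrix.one_apply, smul_eq_mul]
    norm_num
    simp only [sin_Ee, Ee_add, Ee_sub, Ee_two, mul_inv, inv_inv]
    ring
  · simp only [transferT, ptrace0, Matrix.mul_apply, Fin.sum_univ_two, lift1, Rsix, RsixSwap,
      Kminus, Kplus, Mmat, Matrix.transpose_apply, Fintype.sum_prod_type, Matrix.cons_val',
      Matrix.cons_val_zero, Matrix.cons_val_one, Matrix.head_cons, Matrix.head_fin_const,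
      Matrix.empty_val', Matrix.cons_val_fin_one, Matrix.add_apply, Matrix.smul_apply,
      Matrix.one_apply, smul_eq_mul]
    norm_num
    simp only [sin_Ee, Ee_add, Ee_sub, Ee_two, mul_inv, inv_inv]
    linear_combination ((1/8 : ℂ) * ((Ee lam)⁻¹) * ((Ee ξp)⁻¹) * ((Ee ξm)⁻¹) * (Complex.I)^4 + (1/16 : ℂ) * ((Ee lam)⁻¹) * ((Ee ξp)⁻¹) * (Ee ξm) * (Complex.I)^4 + (-1/16 : ℂ) * ((Ee lam)⁻¹) * (Ee ξp) * ((Ee ξm)⁻¹) * (Complex.I)^4 + (-1/8 : ℂ) * ((Ee lam)⁻¹) * (Ee ξp) * (Ee ξm) * (Complex.I)^4 + (-1/8 : ℂ) * (Ee lam) * ((Ee ξp)⁻¹) * ((Ee ξm)⁻¹) * (Complex.I)^4 + (-1/16 : ℂ) * (Ee lam) * ((Ee ξp)⁻¹) * (Ee ξm) * (Complex.I)^4 + (1/16 : ℂ) * (Ee lam) * (Ee ξp) * ((Ee ξm)⁻¹) * (Complex.I)^4 + (1/8 : ℂ) * (Ee lam) * (Ee ξp) * (Ee ξm) * (Complex.I)^4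 + (-1/8 : ℂ) * (Ee lam) * ((Ee lam)⁻¹)^2 * ((Ee ξp)⁻¹) * ((Ee ξm)⁻¹) * (Complex.I)^4 + (-1/16 : ℂ) * (Ee lam) * ((Ee lam)⁻¹)^2 * ((Ee ξp)⁻¹) * (Ee ξm) * (Complex.I)^4 + (1/16 : ℂ) * (Ee lam) * ((Ee lam)⁻¹)^2 * (Ee ξp) * ((Ee ξm)⁻¹) * (Complex.I)^4 + (1/8 : ℂ) * (Ee lam) * ((Ee lam)⁻¹)^2 * (Ee ξp) * (Ee ξm) * (Complex.I)^4 + (1/8 : ℂ) * (Ee lam)^2 * ((Ee lam)⁻¹) * ((Ee ξp)⁻¹) * ((Ee ξm)⁻¹) * (Complex.I)^4 + (1/16 : ℂ) * (Ee lam)^2 * ((Ee lam)⁻¹) * ((Ee ξp)⁻¹) * (Ee ξm) * (Complex.I)^4 + (-1/16 : ℂ) * (Ee lam)^2 * ((Ee lam)⁻¹) * (Ee ξp) * ((Ee ξm)⁻¹) * (Complex.I)^4 + (-1/8 : ℂ) * (Ee lam)^2 * ((Ee lam)⁻¹) * (Ee ξp) * (Ee ξm) * (Complex.I)^4 + (-1/16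 : ℂ) * ((Ee u)⁻¹)^2 * ((Ee lam)⁻¹) * ((Ee ξp)⁻¹) * ((Ee ξm)⁻¹) * (Complex.I)^4 + (-1/8 : ℂ) * ((Ee u)⁻¹)^2 * ((Ee lam)⁻¹) * ((Ee ξp)⁻¹) * (Ee ξm) * (Complex.I)^4 + (1/8 : ℂ) * ((Ee u)⁻¹)^2 * ((Ee lam)⁻¹) * (Ee ξp) * ((Ee ξm)⁻¹) * (Complex.I)^4 + (1/16 : ℂ) * ((Ee u)⁻¹)^2 * ((Ee lam)⁻¹) * (Ee ξp) * (Ee ξm) * (Complex.I)^4 + (1/16 : ℂ) * ((Ee u)⁻¹)^2 * ((Ee lam)⁻¹)^3 * ((Ee ξp)⁻¹) * ((Ee ξm)⁻¹) * (Complex.I)^4 + (-1/16 : ℂ) * ((Ee u)⁻¹)^2 * ((Ee lam)⁻¹)^3 * (Ee ξp) * (Ee ξm) * (Complex.I)^4 + (1/16 : ℂ) * ((Ee u)⁻¹)^2 * (Ee lam) * ((Ee ξp)⁻¹) * ((Ee ξm)⁻¹) * (Complex.I)^4 + (-1/16 : ℂ) * ((Ee u)⁻¹)^2 * (Ee lam)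 * (Ee ξp) * (Ee ξm) * (Complex.I)^4 + (-1/16 : ℂ) * ((Ee u)⁻¹)^2 * (Ee lam) * ((Ee lam)⁻¹)^2 * ((Ee ξp)⁻¹) * ((Ee ξm)⁻¹) * (Complex.I)^4 + (1/8 : ℂ) * ((Ee u)⁻¹)^2 * (Ee lam) * ((Ee lam)⁻¹)^2 * ((Ee ξp)⁻¹) * (Ee ξm) * (Complex.I)^4 + (-1/8 : ℂ) * ((Ee u)⁻¹)^2 * (Ee lam) * ((Ee lam)⁻¹)^2 * (Ee ξp) * ((Ee ξm)⁻¹) * (Complex.I)^4 + (1/16 : ℂ) * ((Ee u)⁻¹)^2 * (Ee lam) * ((Ee lam)⁻¹)^2 * (Ee ξp) * (Ee ξm) * (Complex.I)^4 + (1/8 : ℂ) * (Ee u) * ((Ee u)⁻¹) * ((Ee lam)⁻¹) * ((Ee ξp)⁻¹) * ((Ee ξm)⁻¹) * (Complex.I)^4 + (1/16 : ℂ) * (Ee u) * ((Ee u)⁻¹) * ((Ee lam)⁻¹) * ((Ee ξp)⁻¹) * (Ee ξm) * (Complex.I)^4 + (-1/16 : ℂ) * (Ee u) * ((Ee u)⁻¹)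 * ((Ee lam)⁻¹) * (Ee ξp) * ((Ee ξm)⁻¹) * (Complex.I)^4 + (-1/8 : ℂ) * (Ee u) * ((Ee u)⁻¹) * ((Ee lam)⁻¹) * (Ee ξp) * (Ee ξm) * (Complex.I)^4 + (-1/16 : ℂ) * (Ee u) * ((Ee u)⁻¹) * ((Ee lam)⁻¹)^3 * ((Ee ξp)⁻¹) * (Ee ξm) * (Complex.I)^4 + (1/16 : ℂ) * (Ee u) * ((Ee u)⁻¹) * ((Ee lam)⁻¹)^3 * (Ee ξp) * ((Ee ξm)⁻¹) * (Complex.I)^4 + (-1/8 : ℂ) * (Ee u) * ((Ee u)⁻¹) * (Ee lam) * ((Ee ξp)⁻¹) * ((Ee ξm)⁻¹) * (Complex.I)^4 + (-1/16 : ℂ) * (Ee u) * ((Ee u)⁻¹) * (Ee lam) * ((Ee ξp)⁻¹) * (Ee ξm) * (Complex.I)^4 + (1/16 : ℂ) * (Ee u) * ((Ee u)⁻¹) * (Ee lam) * (Ee ξp) * ((Ee ξm)⁻¹) * (Complex.I)^4 + (1/8 : ℂ) * (Ee u) * ((Ee u)⁻¹) * (Ee lam) * (Ee ξp) * (Ee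 ξm) * (Complex.I)^4 + (-1/8 : ℂ) * (Ee u) * ((Ee u)⁻¹) * (Ee lam) * ((Ee lam)⁻¹)^2 * ((Ee ξp)⁻¹) * ((Ee ξm)⁻¹) * (Complex.I)^4 + (1/8 : ℂ) * (Ee u) * ((Ee u)⁻¹) * (Ee lam) * ((Ee lam)⁻¹)^2 * ((Ee ξp)⁻¹) * (Ee ξm) * (Complex.I)^4 + (-1/8 : ℂ) * (Ee u) * ((Ee u)⁻¹) * (Ee lam) * ((Ee lam)⁻¹)^2 * (Ee ξp) * ((Ee ξm)⁻¹) * (Complex.I)^4 + (1/8 : ℂ) * (Ee u) * ((Ee u)⁻¹) * (Ee lam) * ((Ee lam)⁻¹)^2 * (Ee ξp) * (Ee ξm) * (Complex.I)^4 + (1/8 : ℂ) * (Ee u) * ((Ee u)⁻¹) * (Ee lam)^2 * ((Ee lam)⁻¹) * ((Ee ξp)⁻¹) * ((Ee ξm)⁻¹) * (Complex.I)^4 + (-1/8 : ℂ) * (Ee u) * ((Ee u)⁻¹) * (Ee lam)^2 * ((Ee lam)⁻¹) * ((Ee ξp)⁻¹) * (Ee ξm) * (Complex.I)^4 + (1/8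 : ℂ) * (Ee u) * ((Ee u)⁻¹) * (Ee lam)^2 * ((Ee lam)⁻¹) * (Ee ξp) * ((Ee ξm)⁻¹) * (Complex.I)^4 + (-1/8 : ℂ) * (Ee u) * ((Ee u)⁻¹) * (Ee lam)^2 * ((Ee lam)⁻¹) * (Ee ξp) * (Ee ξm) * (Complex.I)^4 + (1/16 : ℂ) * (Ee u) * ((Ee u)⁻¹) * (Ee lam)^3 * ((Ee ξp)⁻¹) * (Ee ξm) * (Complex.I)^4 + (-1/16 : ℂ) * (Ee u) * ((Ee u)⁻¹) * (Ee lam)^3 * (Ee ξp) * ((Ee ξm)⁻¹) * (Complex.I)^4 + (-1/16 : ℂ) * (Ee u)^2 * ((Ee lam)⁻¹) * ((Ee ξp)⁻¹) * ((Ee ξm)⁻¹) * (Complex.I)^4 + (1/16 : ℂ) * (Ee u)^2 * ((Ee lam)⁻¹) * (Ee ξp) * (Ee ξm) * (Complex.I)^4 + (1/16 : ℂ) * (Ee u)^2 * (Ee lam) * ((Ee ξp)⁻¹) * ((Ee ξm)⁻¹) * (Complex.I)^4 + (1/8 : ℂ) * (Ee u)^2 * (Ee lam) * ((Ee ξp)⁻¹)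 * (Ee ξm) * (Complex.I)^4 + (-1/8 : ℂ) * (Ee u)^2 * (Ee lam) * (Ee ξp) * ((Ee ξm)⁻¹) * (Complex.I)^4 + (-1/16 : ℂ) * (Ee u)^2 * (Ee lam) * (Ee ξp) * (Ee ξm) * (Complex.I)^4 + (1/16 : ℂ) * (Ee u)^2 * (Ee lam)^2 * ((Ee lam)⁻¹) * ((Ee ξp)⁻¹) * ((Ee ξm)⁻¹) * (Complex.I)^4 + (-1/8 : ℂ) * (Ee u)^2 * (Ee lam)^2 * ((Ee lam)⁻¹) * ((Ee ξp)⁻¹) * (Ee ξm) * (Complex.I)^4 + (1/8 : ℂ) * (Ee u)^2 * (Ee lam)^2 * ((Ee lam)⁻¹) * (Ee ξp) * ((Ee ξm)⁻¹) * (Complex.I)^4 + (-1/16 : ℂ) * (Ee u)^2 * (Ee lam)^2 * ((Ee lam)⁻¹) * (Ee ξp) * (Ee ξm) * (Complex.I)^4 + (-1/16 : ℂ) * (Ee u)^2 * (Ee lam)^3 * ((Ee ξp)⁻¹) * ((Ee ξm)⁻¹) * (Complex.I)^4 + (1/16 : ℂ) * (Ee u)^2 * (Ee lam)^3 * (Ee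 ξp) * (Ee ξm) * (Complex.I)^4) * hu + ((-1/8 : ℂ) * ((Ee lam)⁻¹) * ((Ee ξp)⁻¹) * ((Ee ξm)⁻¹) * (Complex.I)^4 + (-1/16 : ℂ) * ((Ee lam)⁻¹) * ((Ee ξp)⁻¹) * (Ee ξm) * (Complex.I)^4 + (1/16 : ℂ) * ((Ee lam)⁻¹) * (Ee ξp) * ((Ee ξm)⁻¹) * (Complex.I)^4 + (1/8 : ℂ) * ((Ee lam)⁻¹) * (Ee ξp) * (Ee ξm) * (Complex.I)^4 + (1/8 : ℂ) * (Ee lam) * ((Ee ξp)⁻¹) * ((Ee ξm)⁻¹) * (Complex.I)^4 + (1/16 : ℂ) * (Ee lam) * ((Ee ξp)⁻¹) * (Ee ξm) * (Complex.I)^4 + (-1/16 : ℂ) * (Ee lam) * (Ee ξp) * ((Ee ξm)⁻¹) * (Complex.I)^4 + (-1/8 : ℂ) * (Ee lam) * (Ee ξp) * (Ee ξm) * (Complex.I)^4 + (1/16 : ℂ) * ((Ee u)⁻¹)^2 * ((Ee lam)⁻¹) * ((Ee ξp)⁻¹) * ((Ee ξm)⁻¹) * (Complex.I)^4 + (1/8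 : ℂ) * ((Ee u)⁻¹)^2 * ((Ee lam)⁻¹) * ((Ee ξp)⁻¹) * (Ee ξm) * (Complex.I)^4 + (-1/8 : ℂ) * ((Ee u)⁻¹)^2 * ((Ee lam)⁻¹) * (Ee ξp) * ((Ee ξm)⁻¹) * (Complex.I)^4 + (-1/16 : ℂ) * ((Ee u)⁻¹)^2 * ((Ee lam)⁻¹) * (Ee ξp) * (Ee ξm) * (Complex.I)^4 + (-1/16 : ℂ) * ((Ee u)⁻¹)^2 * (Ee lam) * ((Ee ξp)⁻¹) * ((Ee ξm)⁻¹) * (Complex.I)^4 + (1/16 : ℂ) * ((Ee u)⁻¹)^2 * (Ee lam) * (Ee ξp) * (Ee ξm) * (Complex.I)^4 + (-1/16 : ℂ) * ((Ee u)⁻¹)^4 * ((Ee lam)⁻¹) * ((Ee ξp)⁻¹) * (Ee ξm) * (Complex.I)^4 + (1/16 : ℂ) * ((Ee u)⁻¹)^4 * ((Ee lam)⁻¹) * (Ee ξp) * ((Ee ξm)⁻¹) * (Complex.I)^4 + (1/16 : ℂ) * (Ee u)^2 * ((Ee lam)⁻¹) * ((Ee ξp)⁻¹) * ((Ee ξm)⁻¹)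 * (Complex.I)^4 + (-1/16 : ℂ) * (Ee u)^2 * ((Ee lam)⁻¹) * (Ee ξp) * (Ee ξm) * (Complex.I)^4 + (-1/16 : ℂ) * (Ee u)^2 * (Ee lam) * ((Ee ξp)⁻¹) * ((Ee ξm)⁻¹) * (Complex.I)^4 + (-1/8 : ℂ) * (Ee u)^2 * (Ee lam) * ((Ee ξp)⁻¹) * (Ee ξm) * (Complex.I)^4 + (1/8 : ℂ) * (Ee u)^2 * (Ee lam) * (Ee ξp) * ((Ee ξm)⁻¹) * (Complex.I)^4 + (1/16 : ℂ) * (Ee u)^2 * (Ee lam) * (Ee ξp) * (Ee ξm) * (Complex.I)^4 + (1/16 : ℂ) * (Ee u)^4 * (Ee lam) * ((Ee ξp)⁻¹) * (Ee ξm) * (Complex.I)^4 + (-1/16 : ℂ) * (Ee u)^4 * (Ee lam) * (Ee ξp) * ((Ee ξm)⁻¹) * (Complex.I)^4) * hl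

lemma comm_aux (M : Matrix (Fin 2) (Fin 2) ℂ) (a b c d : ℂ) :
    (a • (1 : Matrix (Fin 2) (Fin 2) ℂ) + b • M) * (c • 1 + d • M) =
      (c • (1 : Matrix (Fin 2) (Fin 2) ℂ) + d • M) * (a • 1 + b • M) := by
  simp only [add_mul, mul_add, smul_mul_assoc, mul_smul_comm, smul_add, smul_smul, one_mul,
    mul_one]
  module

/-- the double-row transfer matrices commute. -/
theorem transfer_matrices_commute (lam ξp μp νp ξm μm νm u v : ℂ) :
    transferT lam ξp μp νp ξm μm νm u * transferT lam ξp μp νp ξm μm νm v =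
      transferT lam ξp μp νp ξm μm νm v * transferT lam ξp μp νp ξm μm νm u := by
  rw [transferT_form lam ξp μp νp ξm μm νm u, transferT_form lam ξp μp νp ξm μm νm v,
    comm_aux]
end
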